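/- arXiv:2410.00437 — 2 statements merged into one kernel-verified Lean document; each statement's English description precedes it below -/
import Mathlib

section
/- Let ⋆ be a semistar operation on R. Then: (1) ⋆_{a(h)} is a graded-e.a.b. semistar operation of finite type on R; (2) ⋆_f ≤ ⋆_{a(h)} ≤ ⋆_a, where for semistar operations σ, τ one writes σ ≤ τ if E^σ ⊆ E^τ for every nonzero R-submodule E of K; (3) (⋆_{a(h)})_a = ⋆_a. -/
open Pointwise

section
/- `Γ` is a nonzero torsionless (i.e. admitting a compatible total order) cancellative
commutative monoid, `A` is an integral domain graded by `Γ` via `𝒜`, with quotient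
field `K`. -/
variable {Γ : Type*} [AddCommMonoid Γ] [LinearOrder Γ]
  [CovariantClass Γ Γ (· + ·) (· < ·)] [Nontrivial Γ]
variable {A : Type*} [CommRing A] [IsDomain A]
variable {K : Type*} [Field K] [Algebra A K] [IsFractionRing A K]

instance : SMulCommClass K A K := SMulCommClass.symm A K K

variable (𝒜 : Γ → AddSubgroup A) [GradedRing 𝒜]

/-- `a` is a nonzero homogeneous element of the graded domain `A`. -/
def IsHomog (a : A) : Prop := a ≠ 0 ∧ ∃ γ : Γ, a ∈ 𝒜 γ

/-- `x ∈ K` is a (nonzero) homogeneous element of the homogeneous quotient ring `R_H`,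
i.e. `x = a/s` with `a` a nonzero homogeneous element and `s ∈ H`. -/
def IsHomogElem (x : K) : Prop :=
  ∃ a s : A, IsHomog 𝒜 a ∧ IsHomog 𝒜 s ∧ x * algebraMap A K s = algebraMap A K a

/-- `x ∈ K` belongs to the homogeneous quotient ring `R_H`. -/
def MemRH (x : K) : Prop :=
  ∃ a s : A, IsHomog 𝒜 s ∧ x * algebraMap A K s = algebraMap A K a

/-- The image in `K` of an integral ideal of `A`. -/
def idealToK (I : Ideal A) : Submodule A K := Submodule.map (Algebra.linearMap A K) I

/-- `E` is a homogeneous fractional ideal of `A`: `sE` is (the image in `K` of) a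
homogeneous integral ideal for some nonzero homogeneous `s`. -/
def IsHomogFrac (E : Submodule A K) : Prop :=
  ∃ s : A, IsHomog 𝒜 s ∧ ∃ I : Ideal A, Ideal.IsHomogeneous 𝒜 I ∧
    algebraMap A K s • E = idealToK (K := K) I

/-- The four axioms of a semistar operation, imposed on nonzero `A`-submodules of `K`. -/
def IsSemistar (star : Submodule A K → Submodule A K) : Prop :=
  (∀ x : K, x ≠ 0 → ∀ E : Submodule A K, E ≠ ⊥ → star (x • E) = x • star E) ∧
  (∀ E F : Submodule A K, E ≠ ⊥ → E ≤ F → star E ≤ star F) ∧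
  (∀ E : Submodule A K, E ≠ ⊥ → E ≤ star E) ∧
  (∀ E : Submodule A K, E ≠ ⊥ → star (star E) = star E)

/-- `star` is homogeneous preserving. -/
def HomogPres (star : Submodule A K → Submodule A K) : Prop :=
  ∀ E : Submodule A K, E ≠ ⊥ → IsHomogFrac 𝒜 E → IsHomogFrac 𝒜 (star E)

/-- Membership in `E^{⋆_f} = ⋃ {F^⋆ : F nonzero finitely generated, F ⊆ E}`. -/
def MemStarF (star : Submodule A K → Submodule A K) (E : Submodule A K) (x : K) : Prop :=
  ∃ F : Submodule A K, F ≠ ⊥ ∧ F.FG ∧ F ≤ E ∧ x ∈ star F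

/-- `star` is of finite type, i.e. `⋆ = ⋆_f`. -/
def IsFiniteType (star : Submodule A K → Submodule A K) : Prop :=
  ∀ E : Submodule A K, E ≠ ⊥ → ∀ x : K, x ∈ star E ↔ MemStarF star E x

/-- Membership in `E^{⋆_a}`:  `F^{⋆_a} = ⋃ {((FG)^⋆ : G^⋆) : G nonzero f.g.}` for f.g. `F`,
and `E^{⋆_a} = ⋃ {F^{⋆_a} : F ⊆ E nonzero f.g.}`. -/
def MemStarA (star : Submodule A K → Submodule A K) (E : Submodule A K) (x : K) : Prop :=
  ∃ F : Submodule A K, F ≠ ⊥ ∧ F.FG ∧ F ≤ E ∧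
    ∃ G : Submodule A K, G ≠ ⊥ ∧ G.FG ∧ ∀ y ∈ star G, x * y ∈ star (F * G)

/-- Membership in `E^{⋆_{a(h)}}`: as in `⋆_a` but with `G` ranging over nonzero finitely
generated *homogeneous* fractional ideals. -/
def MemStarAH (star : Submodule A K → Submodule A K) (E : Submodule A K) (x : K) : Prop :=
  ∃ F : Submodule A K, F ≠ ⊥ ∧ F.FG ∧ F ≤ E ∧
    ∃ G : Submodule A K, G ≠ ⊥ ∧ G.FG ∧ IsHomogFrac 𝒜 G ∧ ∀ y ∈ star G, x * y ∈ star (F * G)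

/-- `star` is graded-e.a.b. -/
def IsGrEab (star : Submodule A K → Submodule A K) : Prop :=
  ∀ E F G : Submodule A K,
    E ≠ ⊥ → E.FG → IsHomogFrac 𝒜 E →
    F ≠ ⊥ → F.FG → IsHomogFrac 𝒜 F →
    G ≠ ⊥ → G.FG → IsHomogFrac 𝒜 G →
    star (E * F) ≤ star (E * G) → star F ≤ star G

/-- The `A`-submodule of `K` generated by all products `e * v`, `e ∈ E`, `v ∈ S`
(e.g. `EV` for an overring `V`). -/
def mulSet (E : Submodule A K) (S : Set K) : Submodule A K :=
  Submodule.span A {z : K | ∃ e ∈ E, ∃ v ∈ S, z = e * v}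

/-- The `b`-operation: `E^b = ⋂ {EV : V a valuation overring of A}`. -/
def bOp : Submodule A K → Submodule A K := fun E =>
  ⨅ (V : ValuationSubring K) (_ : ∀ a : A, algebraMap A K a ∈ V), mulSet E (V : Set K)

/-- The image of a polynomial over `A` in the rational function field `K(X)`. -/
noncomputable def polyToRatFunc (f : Polynomial A) : RatFunc K :=
  algebraMap (Polynomial K) (RatFunc K) (Polynomial.map (algebraMap A K) f)

/-- The content ideal `c(f)` of a polynomial. -/
def contentIdeal (f : Polynomial A) : Ideal A := Ideal.span (Set.range f.coeff)

/-- The homogeneous content ideal `𝒜_f`, generated by all homogeneous components of all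
coefficients of `f`. -/
def homogContentIdeal (f : Polynomial A) : Ideal A :=
  Ideal.span {a : A | ∃ (n : ℕ) (γ : Γ), a = (DirectSum.decompose 𝒜 (f.coeff n) γ : A)}

/-- The Kronecker function ring `Kr(R,⋆)` as a subset of `K(X)`. -/
def KrSet (star : Submodule A K → Submodule A K) : Set (RatFunc K) :=
  {q | ∃ f g h : Polynomial A, g ≠ 0 ∧ h ≠ 0 ∧
    q * polyToRatFunc (K := K) g = polyToRatFunc (K := K) f ∧
    idealToK (contentIdeal f * contentIdeal h) ≤ star (idealToK (contentIdeal g * contentIdeal h))}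

/-- The homogeneous Kronecker function ring `KR(R,⋆)` as a subset of `K(X)`. -/
def KRSet (star : Submodule A K → Submodule A K) : Set (RatFunc K) :=
  {q | ∃ f g h : Polynomial A, g ≠ 0 ∧ h ≠ 0 ∧
    q * polyToRatFunc (K := K) g = polyToRatFunc (K := K) f ∧
    idealToK (homogContentIdeal 𝒜 f * homogContentIdeal 𝒜 h) ≤
      star (idealToK (homogContentIdeal 𝒜 g * homogContentIdeal 𝒜 h))}

/-- `V` is a homogeneous overring of `A`: `R ⊆ V ⊆ R_H` and `V` is generated as an
additive group by its homogeneous elements. -/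
def IsHomogOverring (V : Subring K) : Prop :=
  (∀ a : A, algebraMap A K a ∈ V) ∧ (∀ x ∈ V, MemRH 𝒜 x) ∧
  (∀ v ∈ V, v ∈ AddSubgroup.closure {x : K | x ∈ V ∧ IsHomogElem 𝒜 x})

/-- `V` is a gr-valuation overring of `A`. -/
def IsGrValOverring (V : Subring K) : Prop :=
  IsHomogOverring 𝒜 V ∧ ∀ x : K, IsHomogElem 𝒜 x → x ∈ V ∨ x⁻¹ ∈ V

/-- `V` is a gr-`⋆`-valuation overring of `A`: `F^⋆ ⊆ FV` for every nonzero finitely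
generated homogeneous fractional ideal `F`. -/
def IsGrStarValOverring (star : Submodule A K → Submodule A K) (V : Subring K) : Prop :=
  ∀ F : Submodule A K, F ≠ ⊥ → F.FG → IsHomogFrac 𝒜 F → star F ≤ mulSet F (V : Set K)

end

/-
Everything rests on one property of a semistar operation: `Z * X ≤ Y^⋆` implies
`Z * X^⋆ ≤ Y^⋆` (apply the axioms to `z • X`, `z ∈ Z`), so that
`(Y^⋆ : X^⋆) = (Y^⋆ : X)`. With this, the witnesses `(F, G)` of `x ∈ E^{⋆_{a(h)}}` can be
enlarged to `(F', G * H)` for `F ⊆ F'` and any `H`, and since products of homogeneous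
fractional ideals are homogeneous, finitely many witnesses combine into a single one. A
finitely generated `N ⊆ T^{⋆_{a(h)}}` therefore satisfies `N * W ⊆ (F * W)^⋆` for one
finitely generated `F ⊆ T` and one homogeneous `W`; idempotence, the graded-e.a.b. property
and `(⋆_{a(h)})_a ≤ ⋆_a` all follow by absorbing such a `W` into the witness.
-/

open Submodule

section Semistar

variable {A K : Type*} [CommRing A] [Field K] [Algebra A K]

theorem Submodule.mul_ne_bot {M N : Submodule A K} (hM : M ≠ ⊥) (hN : N ≠ ⊥) : M * N ≠ ⊥ := by
  simp [hM, hN]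

theorem Submodule.smul_ne_bot {x : K} (hx : x ≠ 0) {M : Submodule A K} (hM : M ≠ ⊥) :
    x • M ≠ ⊥ := by
  rw [← span_singleton_mul (R := A)]
  exact mul_ne_bot (by simpa using hx : (A ∙ x) ≠ ⊥) hM

theorem Submodule.FG.pointwise_smul (x : K) {M : Submodule A K} (hM : M.FG) : (x • M).FG := by
  rw [← span_singleton_mul (R := A)]
  exact (fg_span_singleton x).mul hM

theorem Submodule.smul_le_mul_of_mem {x : K} {M : Submodule A K} (hx : x ∈ M)
    (N : Submodule A K) : x • N ≤ M * N := by
  rw [← span_singleton_mul (R := A)]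
  exact mul_le_mul_left ((span_singleton_le_iff_mem x M).mpr hx) N

theorem Submodule.one_ne_bot : (1 : Submodule A K) ≠ ⊥ :=
  (Submodule.ne_bot_iff _).mpr ⟨1, one_le.mp le_rfl, one_ne_zero⟩

theorem Submodule.fg_one : (1 : Submodule A K).FG := by
  rw [one_eq_span]
  exact fg_span_singleton 1

namespace IsSemistar

variable {star : Submodule A K → Submodule A K} {X Y Z : Submodule A K}

theorem star_le_of_le_star (hstar : IsSemistar star) (hX : X ≠ ⊥) (hY : Y ≠ ⊥)
    (h : X ≤ star Y) : star X ≤ star Y :=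
  (hstar.2.1 X _ hX h).trans (hstar.2.2.2 Y hY).le

theorem mul_star_le_of_mul_le (hstar : IsSemistar star) (hX : X ≠ ⊥) (hY : Y ≠ ⊥)
    (h : Z * X ≤ star Y) : Z * star X ≤ star Y := by
  refine mul_le.mpr fun z hz s hs => ?_
  rcases eq_or_ne z 0 with rfl | hz0
  · simp
  have hzX : star (z • X) ≤ star Y :=
    hstar.star_le_of_le_star (smul_ne_bot hz0 hX) hY ((smul_le_mul_of_mem hz X).trans h)
  rw [hstar.1 z hz0 X hX] at hzX
  exact hzX (smul_mem_pointwise_smul s z _ hs)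

theorem div_star_eq (hstar : IsSemistar star) (hX : X ≠ ⊥) (hY : Y ≠ ⊥) :
    star Y / star X = star Y / X :=
  le_antisymm
    (Submodule.le_div_iff_mul_le.mpr <| (mul_le_mul_right (hstar.2.2.1 X hX) _).trans
      (Submodule.le_div_iff_mul_le.mp le_rfl))
    (Submodule.le_div_iff_mul_le.mpr <|
      hstar.mul_star_le_of_mul_le hX hY (Submodule.le_div_iff_mul_le.mp le_rfl))

theorem mem_div_star_iff (hstar : IsSemistar star) (hX : X ≠ ⊥) (hY : Y ≠ ⊥) {x : K} :
    x ∈ star Y / star X ↔ (A ∙ x) * X ≤ star Y := by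
  rw [hstar.div_star_eq hX hY, ← span_singleton_le_iff_mem, Submodule.le_div_iff_mul_le]

theorem star_mul_le (hstar : IsSemistar star) (hX : X ≠ ⊥) (hY : Y ≠ ⊥) :
    star X * Y ≤ star (X * Y) := by
  rw [mul_comm, mul_comm X]
  exact hstar.mul_star_le_of_mul_le hX (mul_ne_bot hY hX)
    (hstar.2.2.1 _ (mul_ne_bot hY hX))

theorem mul_le_star_mul (hstar : IsSemistar star) (hY : Y ≠ ⊥) (hZ : Z ≠ ⊥)
    (h : X ≤ star Y) : X * Z ≤ star (Y * Z) :=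
  (mul_le_mul_left h Z).trans (hstar.star_mul_le hY hZ)

theorem mul_mul_le_star_of_mul_le_star (hstar : IsSemistar star) {N F F' W V : Submodule A K}
    (hF : F ≠ ⊥) (hW : W ≠ ⊥) (hV : V ≠ ⊥) (hFF' : F ≤ F') (h : N * W ≤ star (F * W)) :
    N * (W * V) ≤ star (F' * (W * V)) :=
  calc N * (W * V) = N * W * V := (mul_assoc N W V).symm
    _ ≤ star (F * W * V) := hstar.mul_le_star_mul (mul_ne_bot hF hW) hV h
    _ ≤ star (F' * (W * V)) := hstar.2.1 _ _ (mul_ne_bot (mul_ne_bot hF hW) hV)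
        (mul_assoc F W V ▸ mul_le_mul_left hFF' _)

end IsSemistar

end Semistar

section Graded

variable {Γ : Type*} [AddCommMonoid Γ] [LinearOrder Γ]
  {A K : Type*} [CommRing A] [Field K] [Algebra A K]
  (𝒜 : Γ → AddSubgroup A) [GradedRing 𝒜]

theorem isHomogFrac_one : IsHomogFrac 𝒜 (1 : Submodule A K) := by
  have := (algebraMap A K).domain_nontrivial
  refine ⟨1, ⟨one_ne_zero, 0, SetLike.one_mem_graded 𝒜⟩, ⊤, Ideal.IsHomogeneous.top 𝒜, ?_⟩
  rw [map_one, one_smul, idealToK, Submodule.map_top, Submodule.one_eq_range]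

/-- `starah` is `⋆_{a(h)}` away from `⊥`, where its value is unconstrained. -/
def IsStarAH (star starah : Submodule A K → Submodule A K) : Prop :=
  ∀ E : Submodule A K, E ≠ ⊥ → ∀ x : K, x ∈ starah E ↔ MemStarAH 𝒜 star E x

variable {𝒜}

theorem IsHomogFrac.mul [IsDomain A] {E F : Submodule A K} (hE : IsHomogFrac 𝒜 E)
    (hF : IsHomogFrac 𝒜 F) : IsHomogFrac 𝒜 (E * F) := by
  obtain ⟨s, ⟨hs0, γ, hsγ⟩, I, hI, hIE⟩ := hE
  obtain ⟨t, ⟨ht0, δ, htδ⟩, J, hJ, hJF⟩ := hF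
  refine ⟨s * t, ⟨mul_ne_zero hs0 ht0, γ + δ, SetLike.mul_mem_graded hsγ htδ⟩, I * J,
    hI.mul hJ, ?_⟩
  have hIJ : idealToK (K := K) (I * J) = idealToK (K := K) I * idealToK (K := K) J :=
    Submodule.map_mul I J (Algebra.ofId A K)
  rw [hIJ, ← hIE, ← hJF, map_mul, smul_mul_assoc, mul_smul_comm, mul_smul]

variable {star : Submodule A K → Submodule A K}

theorem IsSemistar.memStarAH_of_mem_star (hstar : IsSemistar star) {E F : Submodule A K}
    (hF : F ≠ ⊥) (hFfg : F.FG) (hFE : F ≤ E) {x : K} (hx : x ∈ star F) :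
    MemStarAH 𝒜 star E x :=
  ⟨F, hF, hFfg, hFE, 1, one_ne_bot, fg_one, isHomogFrac_one 𝒜, fun y hy => by
    rw [mul_one]
    exact hstar.mul_star_le_of_mul_le one_ne_bot hF (mul_one _).le (mul_mem_mul hx hy)⟩

theorem IsSemistar.exists_mul_le_star_mul_of_forall_memStarAH [IsDomain A]
    (hstar : IsSemistar star) {T N : Submodule A K} (hN : N.FG)
    (h : ∀ x ∈ N, MemStarAH 𝒜 star T x) :
    ∃ F, F ≠ ⊥ ∧ F.FG ∧ F ≤ T ∧
      ∃ W, W ≠ ⊥ ∧ W.FG ∧ IsHomogFrac 𝒜 W ∧ N * W ≤ star (F * W) := by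
  induction N, hN using Submodule.fg_induction with
  | singleton x =>
    obtain ⟨F, hF, hFfg, hFT, W, hW, hWfg, hWh, hxW⟩ := h x (mem_span_singleton_self x)
    exact ⟨F, hF, hFfg, hFT, W, hW, hWfg, hWh,
      (hstar.mem_div_star_iff hW (mul_ne_bot hF hW)).mp hxW⟩
  | sup N₁ N₂ _ _ ih₁ ih₂ =>
    obtain ⟨F₁, hF₁, hF₁fg, hF₁T, W₁, hW₁, hW₁fg, hW₁h, h₁⟩ :=
      ih₁ fun x hx => h x (mem_sup_left hx)
    obtain ⟨F₂, hF₂, hF₂fg, hF₂T, W₂, hW₂, hW₂fg, hW₂h, h₂⟩ :=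
      ih₂ fun x hx => h x (mem_sup_right hx)
    refine ⟨F₁ ⊔ F₂, ne_bot_of_le_ne_bot hF₁ le_sup_left, hF₁fg.sup hF₂fg, sup_le hF₁T hF₂T,
      W₁ * W₂, mul_ne_bot hW₁ hW₂, hW₁fg.mul hW₂fg, hW₁h.mul hW₂h, ?_⟩
    rw [Submodule.sup_mul]
    refine sup_le (hstar.mul_mul_le_star_of_mul_le_star hF₁ hW₁ hW₂ le_sup_left h₁) ?_
    rw [mul_comm W₁]
    exact hstar.mul_mul_le_star_of_mul_le_star hF₂ hW₂ hW₁ le_sup_right h₂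

namespace IsStarAH

variable {starah : Submodule A K → Submodule A K} {E F : Submodule A K}

theorem mono (hah : IsStarAH 𝒜 star starah) (hE : E ≠ ⊥) (hEF : E ≤ F) :
    starah E ≤ starah F := by
  intro x hx
  obtain ⟨F₀, hF₀, hF₀fg, hF₀E, rest⟩ := (hah E hE x).mp hx
  exact (hah F (ne_bot_of_le_ne_bot hE hEF) x).mpr ⟨F₀, hF₀, hF₀fg, hF₀E.trans hEF, rest⟩

theorem le_self (hah : IsStarAH 𝒜 star starah) (hstar : IsSemistar star) (hE : E ≠ ⊥) :
    E ≤ starah E := by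
  intro x hx
  rcases eq_or_ne x 0 with rfl | hx0
  · exact zero_mem _
  have hx' : (A ∙ x) ≠ ⊥ := by simpa using hx0
  exact (hah E hE x).mpr <| hstar.memStarAH_of_mem_star hx' (fg_span_singleton x)
    ((span_singleton_le_iff_mem x E).mpr hx) (hstar.2.2.1 _ hx' (mem_span_singleton_self x))

theorem mul_mem_smul (hah : IsStarAH 𝒜 star starah) (hstar : IsSemistar star) {x z : K}
    (hx : x ≠ 0) (hE : E ≠ ⊥) (hz : z ∈ starah E) : x * z ∈ starah (x • E) := by
  obtain ⟨F, hF, hFfg, hFE, G, hG, hGfg, hGh, hzG⟩ := (hah E hE z).mp hz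
  refine (hah _ (smul_ne_bot hx hE) _).mpr ⟨x • F, smul_ne_bot hx hF,
    hFfg.pointwise_smul x, smul_le_smul_left x hFE,
    G, hG, hGfg, hGh, fun y hy => ?_⟩
  rw [← span_singleton_mul, mul_assoc, span_singleton_mul, hstar.1 x hx _ (mul_ne_bot hF hG),
    mul_assoc]
  exact smul_mem_pointwise_smul _ x _ (hzG y hy)

theorem map_smul (hah : IsStarAH 𝒜 star starah) (hstar : IsSemistar star) {x : K}
    (hx : x ≠ 0) (hE : E ≠ ⊥) : starah (x • E) = x • starah E := by
  refine le_antisymm (fun w hw => ?_) ?_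
  · have hw' := hah.mul_mem_smul hstar (inv_ne_zero hx) (smul_ne_bot hx hE) hw
    rw [inv_smul_smul₀ hx] at hw'
    exact (mem_smul_iff_inv_mul_mem hx).mpr hw'
  · intro w hw
    obtain ⟨z, hz, rfl⟩ := (mem_smul_pointwise_iff_exists _ _ _).mp hw
    exact hah.mul_mem_smul hstar hx hE hz

theorem star_star [IsDomain A] (hah : IsStarAH 𝒜 star starah) (hstar : IsSemistar star)
    (hE : E ≠ ⊥) : starah (starah E) = starah E := by
  have hE' : starah E ≠ ⊥ := ne_bot_of_le_ne_bot hE (hah.le_self hstar hE)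
  refine le_antisymm (fun z hz => ?_) (hah.le_self hstar hE')
  obtain ⟨F, hF, hFfg, hFE, G, hG, hGfg, hGh, hzG⟩ := (hah _ hE' z).mp hz
  obtain ⟨F₀, hF₀, hF₀fg, hF₀E, W, hW, hWfg, hWh, hFW⟩ :=
    hstar.exists_mul_le_star_mul_of_forall_memStarAH hFfg fun x hx => (hah E hE x).mp (hFE hx)
  have hGW := mul_ne_bot hG hW
  have hzGW : (A ∙ z) * (G * W) ≤ star (F * (G * W)) :=
    hstar.mul_mul_le_star_of_mul_le_star hF hG hW le_rfl
      ((hstar.mem_div_star_iff hG (mul_ne_bot hF hG)).mp hzG)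
  have hFGW : F * (G * W) ≤ star (F₀ * (G * W)) :=
    calc F * (G * W) = F * W * G := by ring
      _ ≤ star (F₀ * W * G) := hstar.mul_le_star_mul (mul_ne_bot hF₀ hW) hG hFW
      _ = star (F₀ * (G * W)) := by rw [mul_assoc, mul_comm W G]
  refine (hah E hE z).mpr ⟨F₀, hF₀, hF₀fg, hF₀E, G * W, hGW, hGfg.mul hWfg, hGh.mul hWh,
    (hstar.mem_div_star_iff hGW (mul_ne_bot hF₀ hGW)).mpr ?_⟩
  exact hzGW.trans (hstar.star_le_of_le_star (mul_ne_bot hF hGW) (mul_ne_bot hF₀ hGW) hFGW)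

theorem isSemistar [IsDomain A] (hah : IsStarAH 𝒜 star starah) (hstar : IsSemistar star) :
    IsSemistar starah :=
  ⟨fun _ hx _ hE => hah.map_smul hstar hx hE, fun _ _ hE hEF => hah.mono hE hEF,
    fun _ hE => hah.le_self hstar hE, fun _ hE => hah.star_star hstar hE⟩

theorem isFiniteType (hah : IsStarAH 𝒜 star starah) : IsFiniteType starah := by
  intro E hE x
  rw [hah E hE]
  constructor
  · rintro ⟨F, hF, hFfg, hFE, hx⟩
    exact ⟨F, hF, hFfg, hFE, (hah F hF x).mpr ⟨F, hF, hFfg, le_rfl, hx⟩⟩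
  · rintro ⟨F, hF, hFfg, hFE, hx⟩
    obtain ⟨F₀, hF₀, hF₀fg, hF₀F, hx₀⟩ := (hah F hF x).mp hx
    exact ⟨F₀, hF₀, hF₀fg, hF₀F.trans hFE, hx₀⟩

theorem exists_homog_mem_div [IsDomain A] (hah : IsStarAH 𝒜 star starah)
    (hstar : IsSemistar star) {T G : Submodule A K} (hT : T ≠ ⊥) (hG : G ≠ ⊥) (hGfg : G.FG) {x : K}
    (hx : x • G ≤ starah T) :
    ∃ W, W ≠ ⊥ ∧ W.FG ∧ IsHomogFrac 𝒜 W ∧ x ∈ star (T * W) / star (G * W) := by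
  obtain ⟨F, hF, -, hFT, W, hW, hWfg, hWh, hxGW⟩ :=
    hstar.exists_mul_le_star_mul_of_forall_memStarAH
      (hGfg.pointwise_smul x) fun y hy => (hah T hT y).mp (hx hy)
  refine ⟨W, hW, hWfg, hWh, (hstar.mem_div_star_iff (mul_ne_bot hG hW) (mul_ne_bot hT hW)).mpr ?_⟩
  rw [← mul_assoc, span_singleton_mul]
  exact hxGW.trans (hstar.2.1 _ _ (mul_ne_bot hF hW) (mul_le_mul_left hFT W))

theorem isGrEab [IsDomain A] (hah : IsStarAH 𝒜 star starah) (hstar : IsSemistar star) :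
    IsGrEab 𝒜 starah := by
  intro E F G hE hEfg hEh hF _ _ hG hGfg hGh hle x hx
  have hxE : x • E ≤ starah (E * G) := by
    intro w hw
    obtain ⟨e, he, rfl⟩ := (mem_smul_pointwise_iff_exists _ _ _).mp hw
    rcases eq_or_ne e 0 with rfl | he0
    · simp
    have hex : e * x ∈ starah (E * F) :=
      hah.mono (smul_ne_bot he0 hF) (smul_le_mul_of_mem he F) (hah.mul_mem_smul hstar he0 hF hx)
    rw [smul_eq_mul, mul_comm x e]
    exact hle hex
  obtain ⟨W, hW, hWfg, hWh, hxW⟩ := hah.exists_homog_mem_div hstar (mul_ne_bot hE hG) hE hEfg hxE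
  refine (hah G hG x).mpr ⟨G, hG, hGfg, le_rfl, E * W, mul_ne_bot hE hW, hEfg.mul hWfg,
    hEh.mul hWh, ?_⟩
  rwa [show G * (E * W) = E * G * W by ring]

theorem memStarA_iff [IsDomain A] (hah : IsStarAH 𝒜 star starah) (hstar : IsSemistar star)
    {x : K} : MemStarA starah E x ↔ MemStarA star E x := by
  constructor
  · rintro ⟨F, hF, hFfg, hFE, G, hG, hGfg, hxG⟩
    have hxG' : x • G ≤ starah (F * G) := by
      intro w hw
      obtain ⟨g, hg, rfl⟩ := (mem_smul_pointwise_iff_exists _ _ _).mp hw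
      exact hxG g (hah.le_self hstar hG hg)
    obtain ⟨W, hW, hWfg, -, hxW⟩ := hah.exists_homog_mem_div hstar (mul_ne_bot hF hG) hG hGfg hxG'
    refine ⟨F, hF, hFfg, hFE, G * W, mul_ne_bot hG hW, hGfg.mul hWfg, ?_⟩
    rwa [← mul_assoc]
  · rintro ⟨F, hF, hFfg, hFE, G, hG, hGfg, hxG⟩
    have hFG := mul_ne_bot hF hG
    have hstar_le : star (F * G) ≤ starah (F * G) := fun y hy =>
      (hah _ hFG y).mpr (hstar.memStarAH_of_mem_star hFG (hFfg.mul hGfg) le_rfl hy)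
    refine ⟨F, hF, hFfg, hFE, G, hG, hGfg, ((hah.isSemistar hstar).mem_div_star_iff hG hFG).mpr ?_⟩
    exact ((hstar.mem_div_star_iff hG hFG).mp hxG).trans hstar_le

end IsStarAH

end Graded

theorem starAH_properties_general
    {Γ : Type*} [AddCommMonoid Γ] [LinearOrder Γ]
    {A : Type*} [CommRing A] [IsDomain A]
    {K : Type*} [Field K] [Algebra A K]
    (𝒜 : Γ → AddSubgroup A) [GradedRing 𝒜]
    (star starf stara starah starah_a : Submodule A K → Submodule A K)
    (hstar : IsSemistar star)
    (hf : ∀ E : Submodule A K, E ≠ ⊥ → ∀ x : K, x ∈ starf E ↔ MemStarF star E x)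
    (ha : ∀ E : Submodule A K, E ≠ ⊥ → ∀ x : K, x ∈ stara E ↔ MemStarA star E x)
    (hah : ∀ E : Submodule A K, E ≠ ⊥ → ∀ x : K, x ∈ starah E ↔ MemStarAH 𝒜 star E x)
    (haha : ∀ E : Submodule A K, E ≠ ⊥ → ∀ x : K, x ∈ starah_a E ↔ MemStarA starah E x) :
    (IsSemistar starah ∧ IsGrEab 𝒜 starah ∧ IsFiniteType starah) ∧
    (∀ E : Submodule A K, E ≠ ⊥ → starf E ≤ starah E ∧ starah E ≤ stara E) ∧
    (∀ E : Submodule A K, E ≠ ⊥ → starah_a E = stara E) := by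
  have hah : IsStarAH 𝒜 star starah := hah
  refine ⟨⟨hah.isSemistar hstar, hah.isGrEab hstar, hah.isFiniteType⟩,
    fun E hE => ⟨fun x hx => ?_, fun x hx => ?_⟩, fun E hE => ?_⟩
  · obtain ⟨F, hF, hFfg, hFE, hxF⟩ := (hf E hE x).mp hx
    exact (hah E hE x).mpr (hstar.memStarAH_of_mem_star hF hFfg hFE hxF)
  · obtain ⟨F, hF, hFfg, hFE, G, hG, hGfg, -, hxG⟩ := (hah E hE x).mp hx
    exact (ha E hE x).mpr ⟨F, hF, hFfg, hFE, G, hG, hGfg, hxG⟩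
  · ext x
    rw [haha E hE x, ha E hE x]
    exact hah.memStarA_iff hstar

/-- For a semistar operation `⋆` on the graded domain `R`:
(1) `⋆_{a(h)}` is a graded-e.a.b. semistar operation of finite type on `R`;
(2) `⋆_f ≤ ⋆_{a(h)} ≤ ⋆_a`;  (3) `(⋆_{a(h)})_a = ⋆_a`. -/
theorem starAH_properties
    {Γ : Type*} [AddCommMonoid Γ] [LinearOrder Γ]
    [CovariantClass Γ Γ (· + ·) (· < ·)] [Nontrivial Γ]
    {A : Type*} [CommRing A] [IsDomain A]
    {K : Type*} [Field K] [Algebra A K] [IsFractionRing A K]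
    (𝒜 : Γ → AddSubgroup A) [GradedRing 𝒜]
    (star starf stara starah starah_a : Submodule A K → Submodule A K)
    (hstar : IsSemistar star)
    (hf : ∀ E : Submodule A K, E ≠ ⊥ → ∀ x : K, x ∈ starf E ↔ MemStarF star E x)
    (ha : ∀ E : Submodule A K, E ≠ ⊥ → ∀ x : K, x ∈ stara E ↔ MemStarA star E x)
    (hah : ∀ E : Submodule A K, E ≠ ⊥ → ∀ x : K, x ∈ starah E ↔ MemStarAH 𝒜 star E x)
    (haha : ∀ E : Submodule A K, E ≠ ⊥ → ∀ x : K, x ∈ starah_a E ↔ MemStarA starah E x) :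
    (IsSemistar starah ∧ IsGrEab 𝒜 starah ∧ IsFiniteType starah) ∧
    (∀ E : Submodule A K, E ≠ ⊥ → starf E ≤ starah E ∧ starah E ≤ stara E) ∧
    (∀ E : Submodule A K, E ≠ ⊥ → starah_a E = stara E) :=
  starAH_properties_general 𝒜 star starf stara starah starah_a hstar hf ha hah haha
end

section
/- The set Spec_h(R) of homogeneous prime ideals of R, endowed with the subspace topology induced by the Zariski topology on Spec(R), is a spectral space. -/
/-!
Taking homogeneous cores `p ↦ p*` (the ideal generated by the homogeneous elements of `p`, which is
prime because `Γ` is totally ordered) is a continuous retraction of `Spec R` onto `Spec_h R`, and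
`p* ⊆ p` says that `p*` specializes to `p`. As open sets are stable under generization, the
preimage of an open `U` under the inclusion is the image of `U` under the retraction; so the
inclusion is a spectral map, and a retract of this kind of a spectral space is again spectral.
-/

/-- A spectral space: quasi-compact, `T0`, the quasi-compact open subsets are closed under
finite intersection and form an open basis, and every nonempty irreducible closed subset
has a generic point (= quasi-sober). -/
def IsSpectralSpace (X : Type*) [TopologicalSpace X] : Prop :=
  CompactSpace X ∧ T0Space X ∧ QuasiSober X ∧
  (∀ U V : Set X, IsOpen U → IsCompact U → IsOpen V → IsCompact V → IsCompact (U ∩ V)) ∧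
  TopologicalSpace.IsTopologicalBasis {U : Set X | IsOpen U ∧ IsCompact U}

open Topology TopologicalSpace

section Retraction

variable {X Y : Type*} [TopologicalSpace X] [TopologicalSpace Y]

theorem QuasiSeparatedSpace.of_isSpectralMap [PrespectralSpace Y] [QuasiSeparatedSpace Y]
    {f : X → Y} (hf : IsInducing f) (hf' : IsSpectralMap f) : QuasiSeparatedSpace X := by
  have basis := PrespectralSpace.isTopologicalBasis.isInducing hf
  rw [Set.image_eq_range] at basis
  refine .of_isTopologicalBasis basis fun K L => ?_
  exact hf'.isCompact_preimage_of_isOpen (K.2.1.inter L.2.1)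
    (QuasiSeparatedSpace.inter_isCompact _ _ K.2.1 K.2.2 L.2.1 L.2.2)

variable {i : X → Y} {r : Y → X}

theorem QuasiSober.of_leftInverse [QuasiSober Y] (hi : Continuous i) (hr : Continuous r)
    (hri : Function.LeftInverse r i) : QuasiSober X where
  sober {S} hS hSc := by
    obtain ⟨η, hη⟩ := QuasiSober.sober (hS.image i hi.continuousOn).closure isClosed_closure
    refine ⟨r η, (hη.image hr).trans ((closure_minimal ?_ hSc).antisymm ?_)⟩
    · calc r '' closure (i '' S) ⊆ closure (r '' (i '' S)) := image_closure_subset_closure_image hr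
        _ = S := by rw [hri.image_image, hSc.closure_eq]
    · calc S = r '' (i '' S) := (hri.image_image S).symm
        _ ⊆ closure (r '' closure (i '' S)) := (Set.image_mono subset_closure).trans subset_closure

theorem isSpectralMap_of_leftInverse_of_specializes (hi : Continuous i) (hr : Continuous r)
    (hri : Function.LeftInverse r i) (hspec : ∀ y, i (r y) ⤳ y) : IsSpectralMap i := by
  refine ⟨hi, fun U hU hUc => ?_⟩
  have : i ⁻¹' U = r '' U := by
    refine Set.Subset.antisymm (fun x hx => ⟨i x, hx, hri x⟩) ?_
    rintro _ ⟨y, hy, rfl⟩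
    exact (hspec y).mem_open hU hy
  exact this ▸ hUc.image hr

theorem SpectralSpace.of_leftInverse_of_specializes [SpectralSpace Y] (hi : Continuous i)
    (hr : Continuous r) (hri : Function.LeftInverse r i) (hspec : ∀ y, i (r y) ⤳ y) :
    SpectralSpace X :=
  have hemb : IsEmbedding i := hri.isEmbedding hr hi
  have hspectral := isSpectralMap_of_leftInverse_of_specializes hi hr hri hspec
  { toT0Space := hemb.t0Space
    toCompactSpace := hri.surjective.compactSpace hr
    toQuasiSober := .of_leftInverse hi hr hri
    toQuasiSeparatedSpace := .of_isSpectralMap hemb.isInducing hspectral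
    toPrespectralSpace := .of_isInducing i hemb.isInducing hspectral }

end Retraction

theorem SpectralSpace.isSpectralSpace (X : Type*) [TopologicalSpace X] [SpectralSpace X] :
    IsSpectralSpace X :=
  ⟨inferInstance, inferInstance, inferInstance,
    fun _ _ => QuasiSeparatedSpace.inter_isCompact _ _, PrespectralSpace.isTopologicalBasis⟩

section Graded

open PrimeSpectrum

variable {ι A : Type*} [CommRing A] (𝒜 : ι → AddSubgroup A)

theorem Ideal.mem_homogeneousCore_iff [DecidableEq ι] [AddMonoid ι] [GradedRing 𝒜] (I : Ideal A)
    (a : A) : a ∈ (I.homogeneousCore 𝒜).toIdeal ↔ ∀ n, (DirectSum.decompose 𝒜 a n : A) ∈ I := by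
  classical
  refine ⟨fun ha n => Ideal.toIdeal_homogeneousCore_le 𝒜 I
    ((I.homogeneousCore 𝒜).isHomogeneous n ha), fun ha => ?_⟩
  rw [← DirectSum.sum_support_decompose 𝒜 a]
  exact Ideal.sum_mem _ fun n _ =>
    Ideal.mem_homogeneousCore_of_homogeneous_of_mem ⟨n, SetLike.coe_mem _⟩ (ha n)

variable [AddCommMonoid ι] [LinearOrder ι] [IsOrderedCancelAddMonoid ι] [GradedRing 𝒜]

noncomputable def PrimeSpectrum.homogeneousCore (p : PrimeSpectrum A) :
    {q : PrimeSpectrum A // q.asIdeal.IsHomogeneous 𝒜} :=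
  ⟨⟨(p.asIdeal.homogeneousCore 𝒜).toIdeal, p.isPrime.homogeneousCore⟩,
    (p.asIdeal.homogeneousCore 𝒜).isHomogeneous⟩

theorem PrimeSpectrum.homogeneousCore_val
    (q : {q : PrimeSpectrum A // q.asIdeal.IsHomogeneous 𝒜}) :
    homogeneousCore 𝒜 q.1 = q :=
  Subtype.ext <| PrimeSpectrum.ext q.2.toIdeal_homogeneousCore_eq_self

theorem PrimeSpectrum.homogeneousCore_specializes (p : PrimeSpectrum A) :
    (homogeneousCore 𝒜 p).1 ⤳ p :=
  (le_iff_specializes _ _).mp (Ideal.toIdeal_homogeneousCore_le 𝒜 p.asIdeal)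

theorem PrimeSpectrum.continuous_homogeneousCore : Continuous (homogeneousCore 𝒜) := by
  refine Continuous.subtype_mk (isTopologicalBasis_basic_opens.continuous_iff.mpr ?_) _
  rintro _ ⟨a, rfl⟩
  have : (fun p => (homogeneousCore 𝒜 p).1) ⁻¹' basicOpen a =
      ⋃ n, (basicOpen (DirectSum.decompose 𝒜 a n : A) : Set (PrimeSpectrum A)) := by
    ext p
    simp only [Set.mem_preimage, SetLike.mem_coe, mem_basicOpen, Set.mem_iUnion]
    rw [← not_forall, ← Ideal.mem_homogeneousCore_iff]
    rfl
  exact this ▸ isOpen_iUnion fun n => (basicOpen _).isOpen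

instance PrimeSpectrum.spectralSpace_homogeneous :
    SpectralSpace {p : PrimeSpectrum A // p.asIdeal.IsHomogeneous 𝒜} :=
  .of_leftInverse_of_specializes continuous_subtype_val (continuous_homogeneousCore 𝒜)
    (homogeneousCore_val 𝒜) (homogeneousCore_specializes 𝒜)

end Graded

theorem specH_spectral_general
    {Γ : Type*} [AddCommMonoid Γ] [LinearOrder Γ]
    [CovariantClass Γ Γ (· + ·) (· < ·)]
    {A : Type*} [CommRing A]
    (𝒜 : Γ → AddSubgroup A) [GradedRing 𝒜] :
    IsSpectralSpace {p : PrimeSpectrum A // Ideal.IsHomogeneous 𝒜 p.asIdeal} := by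
  have : IsOrderedCancelAddMonoid Γ := .of_add_lt_add_left fun a _ _ h => add_lt_add_right h a
  exact SpectralSpace.isSpectralSpace _

/-- Let `R` be an integral domain graded by a nonzero torsionless
(i.e. admitting a compatible total order) cancellative commutative monoid `Γ`.  The set
`Spec_h(R)` of homogeneous prime ideals of `R`, with the subspace topology induced by the
Zariski topology on `Spec(R)`, is a spectral space. -/
theorem specH_spectral
    {Γ : Type*} [AddCommMonoid Γ] [LinearOrder Γ]
    [CovariantClass Γ Γ (· + ·) (· < ·)] [Nontrivial Γ]
    {A : Type*} [CommRing A] [IsDomain A]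
    (𝒜 : Γ → AddSubgroup A) [GradedRing 𝒜] :
    IsSpectralSpace {p : PrimeSpectrum A // Ideal.IsHomogeneous 𝒜 p.asIdeal} :=
  specH_spectral_general 𝒜
end
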